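/- Let $n, m, k$ be integers with $3 \le m \le n-1$ and $2 \le k \le m-1$, and let $a_{k+1}, \dots, a_n$ be real numbers. Then $$\sum_{p=k+1}^n a_p^2 \; - \; \left( \frac{1}{2} - \frac{1}{2(k-1)} \right) \left( \sum_{p=k+1}^n a_p \right)^2 \; + \; \sum_{p=k+1}^m \sum_{q=p+1}^n a_p a_q \; \ge \; \frac{m^2 - 2 - n(m-2)}{2(m-1)(n-m)} \left( \sum_{q=m+1}^n a_q \right)^2.$$ -/
import Mathlib

open Finset

/-- Triangular double-sum identity on `Ioc`. -/
lemma tri_aux (a : ℕ → ℝ) (k : ℕ) : ∀ m, (∑ p ∈ Ioc k m, a p) ^ 2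
    = ∑ p ∈ Ioc k m, (a p) ^ 2 + 2 * ∑ p ∈ Ioc k m, ∑ q ∈ Ioc p m, a p * a q := by
  intro m
  induction m with
  | zero => simp
  | succ m ih =>
    rcases le_or_gt (m + 1) k with h | h
    · rw [Finset.Ioc_eq_empty (by omega)]
      simp
    · have hkm : k ≤ m := by omega
      rw [Finset.sum_Ioc_succ_top hkm, Finset.sum_Ioc_succ_top hkm,
        Finset.sum_Ioc_succ_top hkm]
      have hinner : ∑ p ∈ Ioc k m, ∑ q ∈ Ioc p (m + 1), a p * a q
          = ∑ p ∈ Ioc k m, ((∑ q ∈ Ioc p m, a p * a q) + a p * a (m + 1)) := by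
        refine Finset.sum_congr rfl fun p hp => ?_
        rw [Finset.sum_Ioc_succ_top (Finset.mem_Ioc.mp hp).2]
      rw [hinner, Finset.sum_add_distrib, ← Finset.sum_mul, Finset.Ioc_self]
      simp only [Finset.sum_empty]
      linear_combination ih

/-- Key scalar inequality. -/
lemma key_aux (K P N U R V T : ℝ) (hK : 0 < K) (hP : 0 < P) (hN : 0 < N)
    (hU : V ^ 2 ≤ P * U) (hR : T ^ 2 ≤ N * R) :
    (1 / N + 1 / (2 * (K + P)) - 1 / 2) * T ^ 2
      ≤ U / 2 + R + (V + T) ^ 2 / (2 * K) - T ^ 2 / 2 := by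
  rw [← sub_nonneg]
  have h1 : 0 ≤ K * N * (K + P) * (P * U - V ^ 2) := by
    have : 0 ≤ P * U - V ^ 2 := by linarith
    positivity
  have h2 : 0 ≤ 2 * P * K * (K + P) * (N * R - T ^ 2) := by
    have : 0 ≤ N * R - T ^ 2 := by linarith
    positivity
  have h3 : 0 ≤ N * (K * V + P * (V + T)) ^ 2 := by positivity
  have hPpoly : 0 ≤ P * (K * N * (K + P) * U + 2 * K * N * (K + P) * R
      + N * (K + P) * (V + T) ^ 2 - 2 * K * (K + P) * T ^ 2 - K * N * T ^ 2) := by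
    nlinarith [h1, h2, h3]
  have hpoly : 0 ≤ K * N * (K + P) * U + 2 * K * N * (K + P) * R
      + N * (K + P) * (V + T) ^ 2 - 2 * K * (K + P) * T ^ 2 - K * N * T ^ 2 := by
    nlinarith [hPpoly, hP]
  have heq : U / 2 + R + (V + T) ^ 2 / (2 * K) - T ^ 2 / 2
      - (1 / N + 1 / (2 * (K + P)) - 1 / 2) * T ^ 2
      = (K * N * (K + P) * U + 2 * K * N * (K + P) * R
        + N * (K + P) * (V + T) ^ 2 - 2 * K * (K + P) * T ^ 2 - K * N * T ^ 2)
        / (2 * K * N * (K + P)) := by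
    have hKP : 0 < K + P := by linarith
    field_simp
    ring
  rw [heq]
  exact div_nonneg hpoly (by positivity)

/-- Diagonal case of the intermediate-slice estimate. -/
theorem stmt_4 (n m k : ℕ) (hm : 3 ≤ m) (hmn : m ≤ n - 1) (hk : 2 ≤ k) (hkm : k ≤ m - 1)
    (a : ℕ → ℝ) :
    ∑ p ∈ Finset.Icc (k + 1) n, (a p) ^ 2
      - (1 / 2 - 1 / (2 * ((k : ℝ) - 1))) * (∑ p ∈ Finset.Icc (k + 1) n, a p) ^ 2
      + ∑ p ∈ Finset.Icc (k + 1) m, ∑ q ∈ Finset.Icc (p + 1) n, a p * a q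
    ≥ ((m : ℝ) ^ 2 - 2 - (n : ℝ) * ((m : ℝ) - 2)) / (2 * ((m : ℝ) - 1) * ((n : ℝ) - (m : ℝ)))
        * (∑ q ∈ Finset.Icc (m + 1) n, a q) ^ 2 := by
  have hkm' : k ≤ m := by omega
  have hmn' : m ≤ n := by omega
  have hmn2 : m + 1 ≤ n := by omega
  have hkm2 : k + 1 ≤ m := by omega
  simp only [Finset.Icc_add_one_left_eq_Ioc]
  set U : ℝ := ∑ p ∈ Ioc k m, (a p) ^ 2 with hU
  set R : ℝ := ∑ p ∈ Ioc m n, (a p) ^ 2 with hR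
  set V : ℝ := ∑ p ∈ Ioc k m, a p with hV
  set T : ℝ := ∑ p ∈ Ioc m n, a p with hT
  have hsq : ∑ p ∈ Ioc k n, (a p) ^ 2 = U + R :=
    (Finset.sum_Ioc_consecutive (fun p => (a p) ^ 2) hkm' hmn').symm
  have hs : ∑ p ∈ Ioc k n, a p = V + T :=
    (Finset.sum_Ioc_consecutive a hkm' hmn').symm
  have hdouble : ∑ p ∈ Ioc k m, ∑ q ∈ Ioc p n, a p * a q
      = (∑ p ∈ Ioc k m, ∑ q ∈ Ioc p m, a p * a q) + V * T := by
    have h : ∀ p ∈ Ioc k m, ∑ q ∈ Ioc p n, a p * a q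
        = (∑ q ∈ Ioc p m, a p * a q) + a p * T := by
      intro p hp
      rw [← Finset.sum_Ioc_consecutive (fun q => a p * a q) (Finset.mem_Ioc.mp hp).2 hmn',
        hT, Finset.mul_sum]
    rw [Finset.sum_congr rfl h, Finset.sum_add_distrib, ← Finset.sum_mul]
  have htri := tri_aux a k m
  rw [hsq, hs, hdouble]
  -- Cauchy–Schwarz facts
  have hcardU : ((Ioc k m).card : ℝ) = (m : ℝ) - (k : ℝ) := by
    rw [Nat.card_Ioc]
    push_cast [Nat.cast_sub hkm']
    ring
  have hcardR : ((Ioc m n).card : ℝ) = (n : ℝ) - (m : ℝ) := by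
    rw [Nat.card_Ioc]
    push_cast [Nat.cast_sub hmn']
    ring
  have hCauchyU : V ^ 2 ≤ ((m : ℝ) - (k : ℝ)) * U := by
    have := sq_sum_le_card_mul_sum_sq (s := Ioc k m) (f := a)
    rw [← hcardU]
    exact_mod_cast this
  have hCauchyR : T ^ 2 ≤ ((n : ℝ) - (m : ℝ)) * R := by
    have := sq_sum_le_card_mul_sum_sq (s := Ioc m n) (f := a)
    rw [← hcardR]
    exact_mod_cast this
  have hKpos : (0 : ℝ) < (k : ℝ) - 1 := by
    have : (2 : ℝ) ≤ (k : ℝ) := by exact_mod_cast hk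
    linarith
  have hPpos : (0 : ℝ) < (m : ℝ) - (k : ℝ) := by
    have : (k : ℝ) + 1 ≤ (m : ℝ) := by exact_mod_cast hkm2
    linarith
  have hNpos : (0 : ℝ) < (n : ℝ) - (m : ℝ) := by
    have : (m : ℝ) + 1 ≤ (n : ℝ) := by exact_mod_cast hmn2
    linarith
  have hkey := key_aux ((k : ℝ) - 1) ((m : ℝ) - (k : ℝ)) ((n : ℝ) - (m : ℝ)) U R V T
    hKpos hPpos hNpos hCauchyU hCauchyR
  rw [ge_iff_le]
  have hC : ((m : ℝ) ^ 2 - 2 - (n : ℝ) * ((m : ℝ) - 2))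
      / (2 * ((m : ℝ) - 1) * ((n : ℝ) - (m : ℝ)))
      = 1 / ((n : ℝ) - (m : ℝ)) + 1 / (2 * (((k : ℝ) - 1) + ((m : ℝ) - (k : ℝ)))) - 1 / 2 := by
    have hM : (0 : ℝ) < (m : ℝ) - 1 := by nlinarith
    field_simp
    ring
  rw [hC]
  refine hkey.trans_eq ?_
  linear_combination htri / 2
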